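/- For every integer d ≥ 2 and every real δ with δ ≥ 1 − √((d−1)/d), there exist a unit vector ψ in ℂ^d, d pairwise-distinct unit vectors ψ_1, …, ψ_d in ℂ^d with |⟨ψ_k, ψ⟩| ≥ 1 − δ for every k, and an orthonormal basis (e_j)_{j=1}^d of ℂ^d, such that Σ_{k=1}^d |⟨e_k, ψ_k⟩|² = 0. Consequently, any family of distributions p_k : Λ → ℝ over a finite set Λ (nonnegative, each summing to 1) and response functions ξ_j : Λ → ℝ (nonnegative, with Σ_{j=1}^d ξ_j(λ) = 1 for all λ) satisfying Σ_{λ} ξ_j(λ)p_k(λ) = |⟨e_j, ψ_k⟩|² for all j,k must have Σ_{λ} min_k p_k(λ) = 0. -/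

import Mathlib

/-!
Let `ψ` be the uniform superposition of the standard basis vectors `e_j` and `ψ_k` the uniform
superposition of all of them except `e_k`. Then `|⟨ψ_k, ψ⟩| = √((d-1)/d)`, so all `ψ_k` lie in the
ball of radius `δ` around `ψ`, while `ψ_k ⟂ e_k`. In a model reproducing these statistics, `p_k`
therefore vanishes wherever `ξ_k` does not; as the `ξ_j(λ)` sum to `1`, some `ξ_j(λ)` is positive
at every `λ`, whence `min_k p_k(λ) = 0`.
-/

open scoped ComplexInnerProductSpace
open Finset

namespace EuclideanSpace

variable {ι : Type*} [DecidableEq ι]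

noncomputable def normalizedIndicator (s : Finset ι) : EuclideanSpace ℂ ι :=
  WithLp.toLp 2 fun i => if i ∈ s then ((√(#s : ℝ))⁻¹ : ℂ) else 0

theorem normalizedIndicator_apply (s : Finset ι) (i : ι) :
    normalizedIndicator s i = if i ∈ s then ((√(#s : ℝ))⁻¹ : ℂ) else 0 := rfl

theorem normalizedIndicator_apply_eq_zero_iff {s : Finset ι} {i : ι} :
    normalizedIndicator s i = 0 ↔ i ∉ s := by
  by_cases hi : i ∈ s
  · simp [normalizedIndicator_apply, hi, ne_empty_of_mem hi]
  · simp [normalizedIndicator_apply, hi]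

theorem normalizedIndicator_injective :
    Function.Injective (normalizedIndicator : Finset ι → EuclideanSpace ℂ ι) := by
  intro s t hst
  ext i
  rw [← not_iff_not, ← normalizedIndicator_apply_eq_zero_iff, hst,
    normalizedIndicator_apply_eq_zero_iff]

variable [Fintype ι]

theorem inner_normalizedIndicator (s t : Finset ι) :
    ⟪normalizedIndicator s, normalizedIndicator t⟫ =
      ((#(s ∩ t) / (√(#s : ℝ) * √(#t : ℝ)) : ℝ) : ℂ) := by
  simp only [PiLp.inner_apply, normalizedIndicator_apply, RCLike.inner_apply]
  simp [apply_ite, ite_mul, ← ite_and, ← mem_inter]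
  ring

theorem inner_normalizedIndicator_of_subset {s t : Finset ι} (hst : s ⊆ t) :
    ⟪normalizedIndicator s, normalizedIndicator t⟫ = (√(#s / #t : ℝ) : ℂ) := by
  rw [inner_normalizedIndicator, inter_eq_left.mpr hst, ← div_div, Real.div_sqrt,
    Real.sqrt_div' _ (Nat.cast_nonneg _)]

theorem norm_normalizedIndicator {s : Finset ι} (hs : s.Nonempty) :
    ‖normalizedIndicator s‖ = 1 := by
  rw [norm_eq_sqrt_re_inner (𝕜 := ℂ), inner_normalizedIndicator_of_subset subset_rfl,
    div_self (by positivity)]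
  simp

end EuclideanSpace

open EuclideanSpace

theorem sum_inf'_eq_zero_of_sum_mul_diag_eq_zero {ι Λ : Type*} [Fintype ι] [Fintype Λ]
    (hι : (univ : Finset ι).Nonempty) {p ξ : ι → Λ → ℝ} (hp : ∀ k l, 0 ≤ p k l)
    (hξ : ∀ j l, 0 ≤ ξ j l) (hξsum : ∀ l, ∑ j, ξ j l = 1)
    (hdiag : ∀ j, ∑ l, ξ j l * p j l = 0) :
    ∑ l, univ.inf' hι (fun k => p k l) = 0 := by
  refine sum_eq_zero fun l _ => le_antisymm ?_ (le_inf' hι _ fun k _ => hp k l)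
  obtain ⟨j, -, hj⟩ : ∃ j ∈ univ, ξ j l ≠ 0 :=
    exists_ne_zero_of_sum_ne_zero (by rw [hξsum]; exact one_ne_zero)
  have hξp : ξ j l * p j l = 0 :=
    (sum_eq_zero_iff_of_nonneg fun l _ => mul_nonneg (hξ j l) (hp j l)).mp (hdiag j) l
      (mem_univ l)
  calc univ.inf' hι (fun k => p k l) ≤ p j l := inf'_le _ (mem_univ j)
    _ = 0 := (mul_eq_zero.mp hξp).resolve_left hj

/-- the no-go theorem for `δ`-continuous `ψ`-epistemic models. For every
`d ≥ 2` and every `δ ≥ 1 − √((d−1)/d)` there are a unit vector `ψ`, pairwise-distinct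
unit vectors `ψ_1, …, ψ_d` with `|⟨ψ_k, ψ⟩| ≥ 1 − δ`, and an orthonormal basis
`(e_j)` of `ℂ^d` with `Σ_k |⟨e_k, ψ_k⟩|² = 0`; consequently any ontological model over
a finite set `Λ` reproducing the Born statistics `Σ_λ ξ_j(λ) p_k(λ) = |⟨e_j, ψ_k⟩|²`
has vanishing overlap `Σ_λ min_k p_k(λ) = 0`. -/
theorem nogo_delta_continuous {d : ℕ} (hd : 2 ≤ d) {δ : ℝ}
    (hδ : 1 - Real.sqrt (((d : ℝ) - 1) / d) ≤ δ) :
    ∃ (ψ : EuclideanSpace ℂ (Fin d)) (ψk : Fin d → EuclideanSpace ℂ (Fin d))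
      (e : OrthonormalBasis (Fin d) ℂ (EuclideanSpace ℂ (Fin d))),
      ‖ψ‖ = 1 ∧ (∀ k, ‖ψk k‖ = 1) ∧ Function.Injective ψk ∧
      (∀ k, 1 - δ ≤ ‖⟪ψk k, ψ⟫‖) ∧
      (∑ k, ‖⟪e k, ψk k⟫‖ ^ 2 = 0) ∧
      (∀ (Λ : Type) [Fintype Λ] (p ξ : Fin d → Λ → ℝ),
        (∀ k l, 0 ≤ p k l) → (∀ k, ∑ l, p k l = 1) →
        (∀ j l, 0 ≤ ξ j l) → (∀ l, ∑ j, ξ j l = 1) →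
        (∀ j k, ∑ l, ξ j l * p k l = ‖⟪e j, ψk k⟫‖ ^ 2) →
        ∑ l, (Finset.univ.inf'
            (Finset.univ_nonempty_iff.mpr (Fin.pos_iff_nonempty.mp (by omega)))
            fun k => p k l) = 0) := by
  have : Nontrivial (Fin d) := Fin.nontrivial_iff_two_le.mpr hd
  have hcard (k : Fin d) : (#(univ.erase k) : ℝ) = d - 1 := by
    rw [card_erase_of_mem (mem_univ k), card_univ, Fintype.card_fin,
      Nat.cast_sub (by omega), Nat.cast_one]
  have hdiag (k : Fin d) : ⟪basisFun (Fin d) ℂ k, normalizedIndicator (univ.erase k)⟫ = 0 := by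
    rw [basisFun_inner, normalizedIndicator_apply_eq_zero_iff]
    exact notMem_erase k univ
  refine ⟨normalizedIndicator univ, fun k => normalizedIndicator (univ.erase k),
    basisFun (Fin d) ℂ, norm_normalizedIndicator univ_nonempty,
    fun k => norm_normalizedIndicator univ_nontrivial.erase_nonempty,
    normalizedIndicator_injective.comp fun k k' => (erase_inj univ (mem_univ k)).mp,
    fun k => ?_, sum_eq_zero fun k _ => by rw [hdiag, norm_zero, sq, zero_mul], ?_⟩
  · rw [inner_normalizedIndicator_of_subset (erase_subset k univ), hcard, card_univ,
      Fintype.card_fin, Complex.norm_real, Real.norm_of_nonneg (Real.sqrt_nonneg _)]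
    linarith
  · intro Λ _ p ξ hp _ hξ hξsum hborn
    exact sum_inf'_eq_zero_of_sum_mul_diag_eq_zero _ hp hξ hξsum fun j => by
      rw [hborn j j, hdiag, norm_zero, sq, zero_mul]
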